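/- A cubic smoothing spline exists and is unique: given distinct knots t₁ < ⋯ < tₙ (n ≥ 2), data y₁,…,yₙ, and λ > 0, there is a unique twice continuously differentiable function f minimizing ∑ᵢ (yᵢ − f(tᵢ))² + λ ∫ (f''(t))² dt over the Sobolev space of functions with square-integrable second derivative on [t₁,tₙ], and it is a natural cubic spline with knots at the tᵢ. -/

import Mathlib

open intervalIntegral

/-- `f` is a natural cubic spline with knots `t 0 < ⋯ < t (n-1)`: it is `C²`,
piecewise cubic between consecutive knots, and has vanishing second derivative
at the two boundary knots. -/
def IsNaturalCubicSpline {n : ℕ} (hn : 2 ≤ n) (t : Fin n → ℝ) (f : ℝ → ℝ) : Prop :=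
  ContDiff ℝ 2 f ∧
  (∀ i : Fin n, ∀ h : (i : ℕ) + 1 < n,
    ∃ p : Polynomial ℝ, p.natDegree ≤ 3 ∧
      ∀ s ∈ Set.Icc (t i) (t ⟨(i : ℕ) + 1, h⟩), f s = p.eval s) ∧
  deriv (deriv f) (t ⟨0, by omega⟩) = 0 ∧
  deriv (deriv f) (t ⟨n - 1, by omega⟩) = 0

/-- The penalized residual sum of squares with smoothing parameter `lam`. -/
noncomputable def PRSS {n : ℕ} (hn : 2 ≤ n) (t y : Fin n → ℝ) (lam : ℝ)
    (f : ℝ → ℝ) : ℝ :=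
  (∑ i, (y i - f (t i)) ^ 2) +
    lam * ∫ s in (t ⟨0, by omega⟩)..(t ⟨n - 1, by omega⟩), (deriv (deriv f) s) ^ 2


noncomputable def tp (c x : ℝ) : ℝ := max (x - c) 0

lemma tp_cont (c : ℝ) : Continuous (tp c) := by
  unfold tp; fun_prop

lemma tp_nonneg (c x : ℝ) : 0 ≤ tp c x := le_max_right _ _

lemma tp_of_le {c x : ℝ} (h : x ≤ c) : tp c x = 0 := by
  unfold tp; simp [sub_nonpos.mpr h]

lemma tp_of_ge {c x : ℝ} (h : c ≤ x) : tp c x = x - c := by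
  unfold tp; simp [sub_nonneg.mpr h]

lemma tp_le_abs (c x : ℝ) : tp c x ≤ |x - c| := by
  rcases le_total x c with h | h
  · rw [tp_of_le h]; exact abs_nonneg _
  · rw [tp_of_ge h]; exact le_abs_self _

lemma abs_tp_pow_le (c x : ℝ) (k : ℕ) : |tp c x ^ k| ≤ |(x - c) ^ k| := by
  rw [abs_pow, abs_pow, abs_of_nonneg (tp_nonneg c x)]
  exact pow_le_pow_left₀ (tp_nonneg c x) (tp_le_abs c x) k

lemma hasDerivAt_tp3 (c x : ℝ) :
    HasDerivAt (fun u => tp c u ^ 3) (3 * tp c x ^ 2) x := by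
  rcases lt_trichotomy x c with h | h | h
  · have h0 : HasDerivAt (fun _ : ℝ => (0:ℝ)) 0 x := hasDerivAt_const x 0
    rw [tp_of_le h.le]
    have heq : (fun u => tp c u ^ 3) =ᶠ[nhds x] fun _ => (0:ℝ) := by
      filter_upwards [Iio_mem_nhds h] with u hu
      rw [tp_of_le (le_of_lt hu)]; ring
    simpa using h0.congr_of_eventuallyEq heq
  · subst h
    rw [hasDerivAt_iff_isLittleO]
    have hb : (fun u : ℝ => tp x u ^ 3) =O[nhds x] fun u => (u - x) ^ 3 := by
      apply Asymptotics.IsBigO.of_bound 1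
      filter_upwards with u
      simpa using abs_tp_pow_le x u 3
    have hl : (fun u : ℝ => (u - x) ^ 3) =o[nhds x] fun u => u - x := by
      have h1 : HasDerivAt (fun u : ℝ => (u - x) ^ 3) 0 x := by
        have := ((hasDerivAt_id x).sub_const x).fun_pow 3
        simpa using this
      rw [hasDerivAt_iff_isLittleO] at h1
      simpa using h1
    have := hb.trans_isLittleO hl
    simpa [tp_of_le (le_refl x)] using this
  · rw [tp_of_ge h.le]
    have h1 : HasDerivAt (fun u : ℝ => (u - c) ^ 3) (3 * (x - c) ^ 2) x := by
      have := ((hasDerivAt_id x).sub_const c).fun_pow 3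
      simp only [id_eq, Nat.cast_ofNat, mul_one] at this
      convert this using 1 <;> ring
    have heq : (fun u => tp c u ^ 3) =ᶠ[nhds x] fun u => (u - c) ^ 3 := by
      filter_upwards [Ioi_mem_nhds h] with u hu
      rw [tp_of_ge (le_of_lt hu)]
    exact h1.congr_of_eventuallyEq heq

lemma hasDerivAt_tp2 (c x : ℝ) :
    HasDerivAt (fun u => 3 * tp c u ^ 2) (6 * tp c x) x := by
  rcases lt_trichotomy x c with h | h | h
  · have h0 : HasDerivAt (fun _ : ℝ => (0:ℝ)) 0 x := hasDerivAt_const x 0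
    rw [tp_of_le h.le]
    have heq : (fun u => 3 * tp c u ^ 2) =ᶠ[nhds x] fun _ => (0:ℝ) := by
      filter_upwards [Iio_mem_nhds h] with u hu
      rw [tp_of_le (le_of_lt hu)]; ring
    simpa using h0.congr_of_eventuallyEq heq
  · subst h
    rw [hasDerivAt_iff_isLittleO]
    have hb : (fun u : ℝ => 3 * tp x u ^ 2) =O[nhds x] fun u => (u - x) ^ 2 := by
      apply Asymptotics.IsBigO.of_bound 3
      filter_upwards with u
      have := abs_tp_pow_le x u 2
      simp only [Real.norm_eq_abs, abs_mul]
      calc |(3:ℝ)| * |tp x u ^ 2| ≤ |(3:ℝ)| * |(u - x) ^ 2| := by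
            gcongr
        _ = 3 * |(u - x) ^ 2| := by norm_num
    have hl : (fun u : ℝ => (u - x) ^ 2) =o[nhds x] fun u => u - x := by
      have h1 : HasDerivAt (fun u : ℝ => (u - x) ^ 2) 0 x := by
        have := ((hasDerivAt_id x).sub_const x).fun_pow 2
        simpa using this
      rw [hasDerivAt_iff_isLittleO] at h1
      simpa using h1
    have := hb.trans_isLittleO hl
    simpa [tp_of_le (le_refl x)] using this
  · rw [tp_of_ge h.le]
    have h1 : HasDerivAt (fun u : ℝ => 3 * (u - c) ^ 2) (6 * (x - c)) x := by
      have := (((hasDerivAt_id x).sub_const c).fun_pow 2).const_mul (3:ℝ)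
      simp only [id_eq, Nat.cast_ofNat, mul_one] at this
      exact this.congr_deriv (by ring)
    have heq : (fun u => 3 * tp c u ^ 2) =ᶠ[nhds x] fun u => 3 * (u - c) ^ 2 := by
      filter_upwards [Ioi_mem_nhds h] with u hu
      rw [tp_of_ge (le_of_lt hu)]
    exact h1.congr_of_eventuallyEq heq

lemma deriv_tp3 (c : ℝ) : deriv (fun u => tp c u ^ 3) = fun x => 3 * tp c x ^ 2 :=
  funext fun x => (hasDerivAt_tp3 c x).deriv

lemma deriv_tp2 (c : ℝ) : deriv (fun u => 3 * tp c u ^ 2) = fun x => 6 * tp c x :=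
  funext fun x => (hasDerivAt_tp2 c x).deriv

lemma contDiff_tp3 (c : ℝ) : ContDiff ℝ 2 (fun u => tp c u ^ 3) := by
  rw [show (2 : WithTop ℕ∞) = 1 + 1 by norm_num, contDiff_succ_iff_deriv]
  refine ⟨fun x => (hasDerivAt_tp3 c x).differentiableAt, by norm_num, ?_⟩
  rw [deriv_tp3]
  rw [show (1 : WithTop ℕ∞) = 0 + 1 by norm_num, contDiff_succ_iff_deriv]
  refine ⟨fun x => (hasDerivAt_tp2 c x).differentiableAt, by norm_num, ?_⟩
  rw [deriv_tp2]
  exact contDiff_zero.mpr (continuous_const.mul (tp_cont c))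

lemma cd2_facts {h : ℝ → ℝ} (hh : ContDiff ℝ 2 h) :
    Differentiable ℝ h ∧ Differentiable ℝ (deriv h) ∧
      Continuous (deriv h) ∧ Continuous (deriv (deriv h)) := by
  rw [show (2 : WithTop ℕ∞) = 1 + 1 by norm_num, contDiff_succ_iff_deriv] at hh
  obtain ⟨hd, -, hh1⟩ := hh
  have h1 := contDiff_one_iff_deriv.mp hh1
  exact ⟨hd, h1.1, hh1.continuous, h1.2⟩

section spline

variable {n : ℕ} (t : Fin n → ℝ)

noncomputable def splF (a b : ℝ) (c : Fin n → ℝ) : ℝ → ℝ :=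
  fun x => a + b * x + ∑ k, c k * tp (t k) x ^ 3

noncomputable def splF1 (b : ℝ) (c : Fin n → ℝ) : ℝ → ℝ :=
  fun x => b + ∑ k, c k * (3 * tp (t k) x ^ 2)

noncomputable def splF2 (c : Fin n → ℝ) : ℝ → ℝ :=
  fun x => ∑ k, c k * (6 * tp (t k) x)

lemma splF_hasDerivAt (a b : ℝ) (c : Fin n → ℝ) (x : ℝ) :
    HasDerivAt (splF t a b c) (splF1 t b c x) x := by
  have hsum : HasDerivAt (fun x => ∑ k, c k * tp (t k) x ^ 3)
      (∑ k, c k * (3 * tp (t k) x ^ 2)) x :=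
    HasDerivAt.fun_sum fun k _ => (hasDerivAt_tp3 (t k) x).const_mul (c k)
  have hb : HasDerivAt (fun x : ℝ => a + b * x) b x := by
    simpa using ((hasDerivAt_id x).const_mul b).const_add a
  exact hb.add hsum

lemma splF1_hasDerivAt (b : ℝ) (c : Fin n → ℝ) (x : ℝ) :
    HasDerivAt (splF1 t b c) (splF2 t c x) x := by
  have hsum : HasDerivAt (fun x => ∑ k, c k * (3 * tp (t k) x ^ 2))
      (∑ k, c k * (6 * tp (t k) x)) x :=
    HasDerivAt.fun_sum fun k _ => (hasDerivAt_tp2 (t k) x).const_mul (c k)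
  exact hsum.const_add b

lemma splF_deriv (a b : ℝ) (c : Fin n → ℝ) : deriv (splF t a b c) = splF1 t b c :=
  funext fun x => (splF_hasDerivAt t a b c x).deriv

lemma splF1_deriv (b : ℝ) (c : Fin n → ℝ) : deriv (splF1 t b c) = splF2 t c :=
  funext fun x => (splF1_hasDerivAt t b c x).deriv

lemma splF_deriv2 (a b : ℝ) (c : Fin n → ℝ) :
    deriv (deriv (splF t a b c)) = splF2 t c := by
  rw [splF_deriv, splF1_deriv]

lemma splF2_cont (c : Fin n → ℝ) : Continuous (splF2 t c) := by
  unfold splF2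
  exact continuous_finset_sum _ fun k _ => continuous_const.mul (continuous_const.mul (tp_cont _))

lemma splF_contDiff (a b : ℝ) (c : Fin n → ℝ) : ContDiff ℝ 2 (splF t a b c) := by
  unfold splF
  refine ContDiff.add (ContDiff.add contDiff_const ?_) ?_
  · exact contDiff_const.mul contDiff_id
  · exact ContDiff.sum fun k _ => contDiff_const.mul (contDiff_tp3 (t k))

/-- The key integration-by-parts identity. -/
lemma splF2_integral (A B : ℝ) (hA : ∀ k, A ≤ t k) (hB : ∀ k, t k ≤ B)
    (c : Fin n → ℝ) (hc1 : ∑ k, c k = 0) (hc2 : ∑ k, c k * t k = 0)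
    {h : ℝ → ℝ} (hh : ContDiff ℝ 2 h) :
    ∫ s in A..B, splF2 t c s * deriv (deriv h) s = 6 * ∑ k, c k * h (t k) := by
  obtain ⟨hd, hd1, hc, hcc⟩ := cd2_facts hh
  set h2 := deriv (deriv h) with hh2
  have key : ∀ k : Fin n, ∫ s in A..B, tp (t k) s * h2 s
      = (B - t k) * deriv h B - h B + h (t k) := by
    intro k
    have hint1 : IntervalIntegrable (fun s => tp (t k) s * h2 s) MeasureTheory.volume A (t k) :=
      ((tp_cont (t k)).mul hcc).intervalIntegrable _ _
    have hint2 : IntervalIntegrable (fun s => tp (t k) s * h2 s) MeasureTheory.volume (t k) B :=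
      ((tp_cont (t k)).mul hcc).intervalIntegrable _ _
    rw [← intervalIntegral.integral_add_adjacent_intervals hint1 hint2]
    have e1 : (∫ s in A..(t k), tp (t k) s * h2 s) = 0 := by
      rw [intervalIntegral.integral_congr (g := fun _ => (0:ℝ)), intervalIntegral.integral_zero]
      intro s hs
      rw [Set.uIcc_of_le (hA k)] at hs
      simp [tp_of_le hs.2]
    have e2 : (∫ s in (t k)..B, tp (t k) s * h2 s)
        = (B - t k) * deriv h B - h B + h (t k) := by
      have hcg : (∫ s in (t k)..B, tp (t k) s * h2 s)
          = ∫ s in (t k)..B, (s - t k) * h2 s := by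
        apply intervalIntegral.integral_congr
        intro s hs
        rw [Set.uIcc_of_le (hB k)] at hs
        simp [tp_of_ge hs.1]
      rw [hcg]
      have hibp := intervalIntegral.integral_mul_deriv_eq_deriv_mul
        (u := fun s => s - t k) (u' := fun _ => (1:ℝ)) (v := deriv h) (v' := h2)
        (a := t k) (b := B)
        (fun x _ => (hasDerivAt_id x).sub_const (t k))
        (fun x _ => (hd1 x).hasDerivAt)
        (intervalIntegrable_const)
        (hcc.intervalIntegrable _ _)
      rw [hibp]
      have : (∫ s in (t k)..B, 1 * deriv h s) = h B - h (t k) := by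
        simp only [one_mul]
        exact intervalIntegral.integral_deriv_eq_sub (fun x _ => hd x)
          (hc.intervalIntegrable _ _)
      rw [this]
      ring
    rw [e1, e2]; ring
  have hsplit : (∫ s in A..B, splF2 t c s * h2 s)
      = ∑ k, c k * 6 * ((B - t k) * deriv h B - h B + h (t k)) := by
    have : ∀ s, splF2 t c s * h2 s = ∑ k, c k * 6 * (tp (t k) s * h2 s) := by
      intro s
      rw [splF2, Finset.sum_mul]
      congr 1; funext k; ring
    simp_rw [this]
    rw [intervalIntegral.integral_finset_sum]
    · congr 1; funext k
      rw [intervalIntegral.integral_const_mul, key k]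
    · intro k _
      exact (continuous_const.mul ((tp_cont (t k)).mul hcc)).intervalIntegrable _ _
  rw [hsplit]
  have expand : ∀ k : Fin n, c k * 6 * ((B - t k) * deriv h B - h B + h (t k))
      = (6 * (B * deriv h B - h B)) * c k - (6 * deriv h B) * (c k * t k)
        + 6 * (c k * h (t k)) := by
    intro k; ring
  simp_rw [expand]
  rw [Finset.sum_add_distrib, Finset.sum_sub_distrib, ← Finset.mul_sum, ← Finset.mul_sum,
    ← Finset.mul_sum, hc1, hc2]
  ring

end spline

section coeffs

variable {n : ℕ}

/-- The linear endomorphism whose surjectivity provides spline coefficients. -/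
noncomputable def splM (t : Fin n → ℝ) (lam : ℝ) :
    (ℝ × ℝ × (Fin n → ℝ)) →ₗ[ℝ] (ℝ × ℝ × (Fin n → ℝ)) where
  toFun w := (∑ k, w.2.2 k, ∑ k, w.2.2 k * t k,
    fun i => w.1 + w.2.1 * t i + (∑ k, w.2.2 k * tp (t k) (t i) ^ 3) + 6 * lam * w.2.2 i)
  map_add' w₁ w₂ := by
    refine Prod.ext ?_ (Prod.ext ?_ ?_)
    · simp [Finset.sum_add_distrib]
    · simp [add_mul, Finset.sum_add_distrib]
    · funext i
      simp only [Prod.snd_add, Prod.fst_add, Pi.add_apply, add_mul,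
        Finset.sum_add_distrib]
      ring
  map_smul' r w := by
    refine Prod.ext ?_ (Prod.ext ?_ ?_)
    · simp [Finset.mul_sum]
    · simp [Finset.mul_sum, mul_assoc]
    · funext i
      simp only [Prod.smul_snd, Prod.smul_fst, Pi.smul_apply, smul_eq_mul,
        RingHom.id_apply]
      have hterm : ∀ k : Fin n, r * w.2.2 k * tp (t k) (t i) ^ 3
          = r * (w.2.2 k * tp (t k) (t i) ^ 3) := fun k => by ring
      simp_rw [hterm]
      rw [← Finset.mul_sum]
      ring

lemma splM_exists (hn : 2 ≤ n) (t : Fin n → ℝ) (ht : StrictMono t)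
    (y : Fin n → ℝ) {lam : ℝ} (hlam : 0 < lam) :
    ∃ a b : ℝ, ∃ c : Fin n → ℝ,
      (∑ k, c k = 0) ∧ (∑ k, c k * t k = 0) ∧
      (∀ i, y i - splF t a b c (t i) = 6 * lam * c i) := by
  have hAk : ∀ k : Fin n, t ⟨0, by omega⟩ ≤ t k := fun k =>
    ht.monotone (by simp [Fin.le_def])
  have hBk : ∀ k : Fin n, t k ≤ t ⟨n - 1, by omega⟩ := fun k =>
    ht.monotone (by simp [Fin.le_def]; omega)
  have h01 : t ⟨0, by omega⟩ < t ⟨1, by omega⟩ := ht (by simp [Fin.lt_def])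
  have hinj : Function.Injective (splM t lam) := by
    rw [injective_iff_map_eq_zero]
    rintro ⟨a, b, c⟩ hw
    simp only [splM, LinearMap.coe_mk, AddHom.coe_mk, Prod.mk_eq_zero] at hw
    obtain ⟨hc1, hc2, hiz⟩ := hw
    have hiz' : ∀ i, splF t a b c (t i) = -(6 * lam * c i) := by
      intro i
      have := congr_fun hiz i
      simp only [Pi.zero_apply] at this
      rw [splF]
      linarith
    have hkey := splF2_integral t (t ⟨0, by omega⟩) (t ⟨n - 1, by omega⟩) hAk hBk c hc1 hc2
      (splF_contDiff t a b c)
    rw [splF_deriv2] at hkey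
    have hnn : 0 ≤ ∫ s in (t ⟨0, by omega⟩)..(t ⟨n - 1, by omega⟩),
        splF2 t c s * splF2 t c s := by
      apply intervalIntegral.integral_nonneg (hAk _)
      intro u _
      exact mul_self_nonneg _
    rw [hkey] at hnn
    have hsum : (∑ k, c k * splF t a b c (t k)) = -(6 * lam) * ∑ k, c k ^ 2 := by
      rw [Finset.mul_sum]
      apply Finset.sum_congr rfl
      intro k _
      rw [hiz' k]; ring
    rw [hsum] at hnn
    have hsq : (0:ℝ) ≤ ∑ k, c k ^ 2 := Finset.sum_nonneg fun k _ => sq_nonneg _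
    have hzero : (∑ k, c k ^ 2) = 0 := by nlinarith
    have hck : ∀ k, c k = 0 := by
      intro k
      have := (Finset.sum_eq_zero_iff_of_nonneg fun k _ => sq_nonneg (c k)).mp hzero
        k (Finset.mem_univ k)
      exact pow_eq_zero_iff two_ne_zero |>.mp this
    have hab : ∀ i, a + b * t i = 0 := by
      intro i
      have := hiz' i
      rw [splF] at this
      simp [hck] at this
      linarith [this]
    have hb : b = 0 := by
      have h0 := hab ⟨0, by omega⟩
      have h1 := hab ⟨1, by omega⟩
      have : b * (t ⟨1, by omega⟩ - t ⟨0, by omega⟩) = 0 := by linarith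
      rcases mul_eq_zero.mp this with h | h
      · exact h
      · exfalso; linarith
    have ha : a = 0 := by have := hab ⟨0, by omega⟩; rw [hb] at this; linarith
    refine Prod.ext ha (Prod.ext hb ?_)
    funext k
    exact hck k
  obtain ⟨⟨a, b, c⟩, hw⟩ := (LinearMap.injective_iff_surjective.mp hinj) (0, 0, y)
  simp only [splM, LinearMap.coe_mk, AddHom.coe_mk, Prod.mk.injEq] at hw
  obtain ⟨hc1, hc2, hy⟩ := hw
  refine ⟨a, b, c, hc1, hc2, fun i => ?_⟩
  have := congr_fun hy i
  rw [splF]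
  linarith

end coeffs

lemma prss_key {n : ℕ} (hn : 2 ≤ n) (t : Fin n → ℝ) (ht : StrictMono t) (y : Fin n → ℝ)
    (lam : ℝ) (a b : ℝ) (c : Fin n → ℝ)
    (hc1 : ∑ k, c k = 0) (hc2 : ∑ k, c k * t k = 0)
    (hstat : ∀ i, y i - splF t a b c (t i) = 6 * lam * c i)
    (g : ℝ → ℝ) (hg : ContDiff ℝ 2 g) :
    PRSS hn t y lam g = PRSS hn t y lam (splF t a b c)
      + (∑ i, (g (t i) - splF t a b c (t i)) ^ 2)
      + lam * ∫ s in (t ⟨0, by omega⟩)..(t ⟨n - 1, by omega⟩),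
          (deriv (deriv g) s - splF2 t c s) ^ 2 := by
  have hAk : ∀ k : Fin n, t ⟨0, by omega⟩ ≤ t k := fun k =>
    ht.monotone (by simp [Fin.le_def])
  have hBk : ∀ k : Fin n, t k ≤ t ⟨n - 1, by omega⟩ := fun k =>
    ht.monotone (by simp [Fin.le_def]; omega)
  obtain ⟨hgd, hg1d, hg1c, hg2c⟩ := cd2_facts hg
  set F := splF t a b c with hF
  have hFcd := splF_contDiff t a b c
  set h : ℝ → ℝ := fun s => g s - F s with hh_def
  have hh : ContDiff ℝ 2 h := hg.sub hFcd
  obtain ⟨hhd, hh1d, hh1c, hh2c⟩ := cd2_facts hh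
  -- second derivative of h
  have hder : deriv (deriv h) = fun s => deriv (deriv g) s - splF2 t c s := by
    have d1 : deriv h = fun s => deriv g s - splF1 t b c s := by
      funext s
      rw [hh_def]
      rw [deriv_fun_sub (hgd s) ((splF_hasDerivAt t a b c s).differentiableAt)]
      rw [splF_deriv]
    rw [d1]
    funext s
    rw [deriv_fun_sub (hg1d s) ((splF1_hasDerivAt t b c s).differentiableAt)]
    rw [splF1_deriv]
  -- second derivative of g
  have hgder : ∀ s, deriv (deriv g) s = splF2 t c s + deriv (deriv h) s := by
    intro s; rw [hder]; ring
  -- the cross-term integral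
  have hcross := splF2_integral t (t ⟨0, by omega⟩) (t ⟨n - 1, by omega⟩) hAk hBk c hc1 hc2 hh
  -- integrability
  have hi0 : IntervalIntegrable (fun s => splF2 t c s ^ 2) MeasureTheory.volume
      (t ⟨0, by omega⟩) (t ⟨n - 1, by omega⟩) :=
    (((splF2_cont t c).pow 2)).intervalIntegrable _ _
  have hicross : IntervalIntegrable (fun s => 2 * (splF2 t c s * deriv (deriv h) s))
      MeasureTheory.volume (t ⟨0, by omega⟩) (t ⟨n - 1, by omega⟩) :=
    (continuous_const.mul ((splF2_cont t c).mul hh2c)).intervalIntegrable _ _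
  have hih : IntervalIntegrable (fun s => deriv (deriv h) s ^ 2) MeasureTheory.volume
      (t ⟨0, by omega⟩) (t ⟨n - 1, by omega⟩) :=
    ((hh2c.pow 2)).intervalIntegrable _ _
  -- expand the integral of (deriv (deriv g))^2
  have hexp : (fun s => deriv (deriv g) s ^ 2)
      = fun s => splF2 t c s ^ 2 + (2 * (splF2 t c s * deriv (deriv h) s)
          + deriv (deriv h) s ^ 2) := by
    funext s; rw [hgder s]; ring
  have hint_split : (∫ s in (t ⟨0, by omega⟩)..(t ⟨n - 1, by omega⟩), deriv (deriv g) s ^ 2)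
      = (∫ s in (t ⟨0, by omega⟩)..(t ⟨n - 1, by omega⟩), splF2 t c s ^ 2)
        + (2 * (6 * ∑ k, c k * h (t k))
        + ∫ s in (t ⟨0, by omega⟩)..(t ⟨n - 1, by omega⟩), deriv (deriv h) s ^ 2) := by
    rw [hexp]
    rw [intervalIntegral.integral_add hi0 (hicross.add hih)]
    congr 1
    rw [intervalIntegral.integral_add hicross hih]
    congr 1
    rw [intervalIntegral.integral_const_mul, hcross]
  -- expand the sum of squares
  have hsum_split : (∑ i, (y i - g (t i)) ^ 2)
      = (∑ i, (y i - F (t i)) ^ 2) - 12 * lam * (∑ k, c k * h (t k))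
        + ∑ i, h (t i) ^ 2 := by
    have hterm : ∀ i : Fin n, (y i - g (t i)) ^ 2
        = (y i - F (t i)) ^ 2 - 12 * lam * (c i * h (t i)) + h (t i) ^ 2 := by
      intro i
      have h1 : g (t i) = F (t i) + h (t i) := by rw [hh_def]; ring
      have h2 := hstat i
      have h3 : y i - (F (t i) + h (t i)) = 6 * lam * c i - h (t i) := by linarith
      rw [h1, h3, h2]; ring
    simp_rw [hterm]
    rw [Finset.sum_add_distrib, Finset.sum_sub_distrib, ← Finset.mul_sum]
  -- put it together
  have hd2F : deriv (deriv F) = splF2 t c := splF_deriv2 t a b c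
  unfold PRSS
  rw [hint_split, hsum_split, hd2F]
  have : ∀ i : Fin n, (g (t i) - F (t i)) ^ 2 = h (t i) ^ 2 := fun i => by rw [hh_def]
  simp_rw [this, hder]
  ring

lemma splF_natural {n : ℕ} (hn : 2 ≤ n) (t : Fin n → ℝ) (ht : StrictMono t)
    (a b : ℝ) (c : Fin n → ℝ) (hc1 : ∑ k, c k = 0) (hc2 : ∑ k, c k * t k = 0) :
    IsNaturalCubicSpline hn t (splF t a b c) := by
  have hAk : ∀ k : Fin n, t ⟨0, by omega⟩ ≤ t k := fun k =>
    ht.monotone (by simp [Fin.le_def])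
  have hBk : ∀ k : Fin n, t k ≤ t ⟨n - 1, by omega⟩ := fun k =>
    ht.monotone (by simp [Fin.le_def]; omega)
  refine ⟨splF_contDiff t a b c, ?_, ?_, ?_⟩
  · -- piecewise polynomial
    intro i h
    refine ⟨Polynomial.C a + Polynomial.C b * Polynomial.X +
      ∑ k ∈ Finset.univ.filter (fun k : Fin n => k ≤ i),
        Polynomial.C (c k) * (Polynomial.X - Polynomial.C (t k)) ^ 3, ?_, ?_⟩
    · apply le_trans (Polynomial.natDegree_add_le _ _)
      refine max_le (le_trans (Polynomial.natDegree_add_le _ _) ?_) ?_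
      · refine max_le ?_ ?_
        · simp
        · apply le_trans (Polynomial.natDegree_mul_le)
          simp [Polynomial.natDegree_X_le]
      · apply Polynomial.natDegree_sum_le_of_forall_le
        intro k _
        apply le_trans (Polynomial.natDegree_mul_le)
        have : ((Polynomial.X - Polynomial.C (t k)) ^ 3 : Polynomial ℝ).natDegree ≤ 3 := by
          apply le_trans (Polynomial.natDegree_pow_le)
          have := Polynomial.natDegree_X_sub_C_le (t k)
          omega
        simp only [Polynomial.natDegree_C, zero_add]
        exact this
    · intro s hs
      have heval : splF t a b c s
          = a + b * s + ∑ k ∈ Finset.univ.filter (fun k : Fin n => k ≤ i),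
              c k * (s - t k) ^ 3 := by
        rw [splF]
        congr 1
        rw [← Finset.sum_filter_add_sum_filter_not Finset.univ (fun k : Fin n => k ≤ i)
          (fun k => c k * tp (t k) s ^ 3)]
        have hz : ∑ k ∈ Finset.univ.filter (fun k : Fin n => ¬ k ≤ i),
            c k * tp (t k) s ^ 3 = 0 := by
          apply Finset.sum_eq_zero
          intro k hk
          simp only [Finset.mem_filter] at hk
          have hik : (⟨(i : ℕ) + 1, h⟩ : Fin n) ≤ k := by
            have := not_le.mp hk.2
            rw [Fin.le_def]
            rw [Fin.lt_def] at this
            simpa using this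
          have : s ≤ t k := le_trans hs.2 (ht.monotone hik)
          rw [tp_of_le this]
          ring
        rw [hz, add_zero]
        apply Finset.sum_congr rfl
        intro k hk
        simp only [Finset.mem_filter] at hk
        have : t k ≤ s := le_trans (ht.monotone hk.2) hs.1
        rw [tp_of_ge this]
      rw [heval]
      simp [Polynomial.eval_finset_sum]
  · rw [splF_deriv2]
    rw [splF2]
    apply Finset.sum_eq_zero
    intro k _
    rw [tp_of_le (hAk k)]
    ring
  · rw [splF_deriv2]
    rw [splF2]
    have hterm : ∀ k : Fin n, c k * (6 * tp (t k) (t ⟨n - 1, by omega⟩))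
        = 6 * t ⟨n - 1, by omega⟩ * c k - 6 * (c k * t k) := by
      intro k
      rw [tp_of_ge (hBk k)]
      ring
    simp_rw [hterm]
    rw [Finset.sum_sub_distrib, ← Finset.mul_sum, ← Finset.mul_sum, hc1, hc2]
    ring

lemma diff_deriv2 {n : ℕ} (t : Fin n → ℝ) (a b : ℝ) (c : Fin n → ℝ)
    (g : ℝ → ℝ) (hg : ContDiff ℝ 2 g) :
    deriv (deriv (fun u => g u - splF t a b c u))
      = fun s => deriv (deriv g) s - splF2 t c s := by
  obtain ⟨hgd, hg1d, hg1c, hg2c⟩ := cd2_facts hg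
  have d1 : deriv (fun u => g u - splF t a b c u) = fun s => deriv g s - splF1 t b c s := by
    funext s
    rw [deriv_fun_sub (hgd s) ((splF_hasDerivAt t a b c s).differentiableAt)]
    rw [splF_deriv]
  rw [d1]
  funext s
  rw [deriv_fun_sub (hg1d s) ((splF1_hasDerivAt t b c s).differentiableAt)]
  rw [splF1_deriv]

/-- Existence and uniqueness of the cubic smoothing spline: among all `C²`
functions with square-integrable second derivative on `[t₁, tₙ]`, there is a
minimizer of the PRSS; it is a natural cubic spline with knots at the `tᵢ`,
and any other minimizer agrees with it on `[t₁, tₙ]`. -/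
theorem smoothing_spline_exists_unique
    {n : ℕ} (hn : 2 ≤ n) (t : Fin n → ℝ) (ht : StrictMono t)
    (y : Fin n → ℝ) (lam : ℝ) (hlam : 0 < lam) :
    ∃ f : ℝ → ℝ,
      ContDiff ℝ 2 f ∧
      IsNaturalCubicSpline hn t f ∧
      (∀ g : ℝ → ℝ, ContDiff ℝ 2 g →
        IntervalIntegrable (fun s => (deriv (deriv g) s) ^ 2) MeasureTheory.volume
          (t ⟨0, by omega⟩) (t ⟨n - 1, by omega⟩) →
        PRSS hn t y lam f ≤ PRSS hn t y lam g) ∧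
      (∀ g : ℝ → ℝ, ContDiff ℝ 2 g →
        IntervalIntegrable (fun s => (deriv (deriv g) s) ^ 2) MeasureTheory.volume
          (t ⟨0, by omega⟩) (t ⟨n - 1, by omega⟩) →
        PRSS hn t y lam g = PRSS hn t y lam f →
        ∀ s ∈ Set.Icc (t ⟨0, by omega⟩) (t ⟨n - 1, by omega⟩), g s = f s) := by
  obtain ⟨a, b, c, hc1, hc2, hstat⟩ := splM_exists hn t ht y hlam
  have hAk : ∀ k : Fin n, t ⟨0, by omega⟩ ≤ t k := fun k =>
    ht.monotone (by simp [Fin.le_def])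
  have hBk : ∀ k : Fin n, t k ≤ t ⟨n - 1, by omega⟩ := fun k =>
    ht.monotone (by simp [Fin.le_def]; omega)
  have hAB : t ⟨0, by omega⟩ < t ⟨n - 1, by omega⟩ := by
    apply ht
    rw [Fin.lt_def]
    simp
    omega
  refine ⟨splF t a b c, splF_contDiff t a b c,
    splF_natural hn t ht a b c hc1 hc2, ?_, ?_⟩
  · -- minimality
    intro g hg _
    have hk := prss_key hn t ht y lam a b c hc1 hc2 hstat g hg
    rw [hk, add_assoc]
    apply le_add_of_nonneg_right
    apply add_nonneg
    · exact Finset.sum_nonneg fun i _ => sq_nonneg _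
    · exact mul_nonneg hlam.le
        (intervalIntegral.integral_nonneg hAB.le fun u _ => sq_nonneg _)
  · -- uniqueness
    intro g hg _ hPR s hs
    have hk := prss_key hn t ht y lam a b c hc1 hc2 hstat g hg
    rw [hPR] at hk
    have hS : (0:ℝ) ≤ ∑ i, (g (t i) - splF t a b c (t i)) ^ 2 :=
      Finset.sum_nonneg fun i _ => sq_nonneg _
    have hI : (0:ℝ) ≤ ∫ u in (t ⟨0, by omega⟩)..(t ⟨n - 1, by omega⟩),
        (deriv (deriv g) u - splF2 t c u) ^ 2 :=
      intervalIntegral.integral_nonneg hAB.le fun u _ => sq_nonneg _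
    have hSzero : (∑ i, (g (t i) - splF t a b c (t i)) ^ 2) = 0 := by nlinarith
    have hIzero : (∫ u in (t ⟨0, by omega⟩)..(t ⟨n - 1, by omega⟩),
        (deriv (deriv g) u - splF2 t c u) ^ 2) = 0 := by nlinarith
    -- values at knots agree
    have hknot : ∀ i : Fin n, g (t i) - splF t a b c (t i) = 0 := by
      intro i
      have := (Finset.sum_eq_zero_iff_of_nonneg
        (fun i _ => sq_nonneg (g (t i) - splF t a b c (t i)))).mp hSzero i (Finset.mem_univ i)
      exact pow_eq_zero_iff two_ne_zero |>.mp this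
    -- the difference function
    set h : ℝ → ℝ := fun u => g u - splF t a b c u with hh_def
    have hh : ContDiff ℝ 2 h := hg.sub (splF_contDiff t a b c)
    obtain ⟨hhd, hh1d, hh1c, hh2c⟩ := cd2_facts hh
    have hder : deriv (deriv h) = fun u => deriv (deriv g) u - splF2 t c u :=
      diff_deriv2 t a b c g hg
    have hq_cont : Continuous fun u => deriv (deriv g) u - splF2 t c u := by
      rw [← hder]; exact hh2c
    -- second derivative of h vanishes on the interval
    have hq2zero : ∀ u ∈ Set.Icc (t ⟨0, by omega⟩) (t ⟨n - 1, by omega⟩),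
        deriv (deriv h) u = 0 := by
      rw [intervalIntegral.integral_of_le hAB.le] at hIzero
      have hint : MeasureTheory.IntegrableOn
          (fun u => (deriv (deriv g) u - splF2 t c u) ^ 2)
          (Set.Ioc (t ⟨0, by omega⟩) (t ⟨n - 1, by omega⟩)) MeasureTheory.volume :=
        (hq_cont.pow 2).integrableOn_Ioc
      have hae := (MeasureTheory.integral_eq_zero_iff_of_nonneg
        (fun u => sq_nonneg _) hint).mp hIzero
      rw [MeasureTheory.Measure.restrict_congr_set MeasureTheory.Ioc_ae_eq_Icc] at hae
      have heq := MeasureTheory.Measure.eqOn_Icc_of_ae_eq MeasureTheory.volume hAB.ne hae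
        ((hq_cont.pow 2).continuousOn) continuousOn_const
      intro u hu
      have h0 := heq hu
      simp only [Pi.zero_apply] at h0
      rw [hder]
      exact pow_eq_zero_iff two_ne_zero |>.mp h0
    -- first derivative of h is constant on the interval
    have hstep1 : ∀ u ∈ Set.Icc (t ⟨0, by omega⟩) (t ⟨n - 1, by omega⟩),
        deriv h u = deriv h (t ⟨0, by omega⟩) := by
      intro u hu
      have hsub : (∫ v in (t ⟨0, by omega⟩)..u, deriv (deriv h) v)
          = deriv h u - deriv h (t ⟨0, by omega⟩) :=
        intervalIntegral.integral_deriv_eq_sub (fun x _ => hh1d x)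
          (hh2c.intervalIntegrable _ _)
      have hz : (∫ v in (t ⟨0, by omega⟩)..u, deriv (deriv h) v) = 0 := by
        rw [intervalIntegral.integral_congr (g := fun _ => (0:ℝ))]
        · simp
        · intro v hv
          rw [Set.uIcc_of_le hu.1] at hv
          exact hq2zero v ⟨hv.1, le_trans hv.2 hu.2⟩
      rw [hz] at hsub
      linarith
    -- h is affine on the interval
    have hstep2 : ∀ u ∈ Set.Icc (t ⟨0, by omega⟩) (t ⟨n - 1, by omega⟩),
        h u = h (t ⟨0, by omega⟩)
          + deriv h (t ⟨0, by omega⟩) * (u - t ⟨0, by omega⟩) := by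
      intro u hu
      have hsub : (∫ v in (t ⟨0, by omega⟩)..u, deriv h v)
          = h u - h (t ⟨0, by omega⟩) :=
        intervalIntegral.integral_deriv_eq_sub (fun x _ => hhd x)
          (hh1c.intervalIntegrable _ _)
      have hconst : (∫ v in (t ⟨0, by omega⟩)..u, deriv h v)
          = deriv h (t ⟨0, by omega⟩) * (u - t ⟨0, by omega⟩) := by
        rw [intervalIntegral.integral_congr
          (g := fun _ => deriv h (t ⟨0, by omega⟩))]
        · rw [intervalIntegral.integral_const]
          simp [smul_eq_mul]
          ring
        · intro v hv
          rw [Set.uIcc_of_le hu.1] at hv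
          exact hstep1 v ⟨hv.1, le_trans hv.2 hu.2⟩
      rw [hconst] at hsub
      linarith
    have hA0 : h (t ⟨0, by omega⟩) = 0 := hknot _
    have h10 : h (t ⟨1, by omega⟩) = 0 := hknot _
    have hd0 : deriv h (t ⟨0, by omega⟩) = 0 := by
      have h1mem : t ⟨1, by omega⟩ ∈ Set.Icc (t ⟨0, by omega⟩) (t ⟨n - 1, by omega⟩) :=
        ⟨hAk _, hBk _⟩
      have h1eq := hstep2 _ h1mem
      rw [h10, hA0] at h1eq
      have hlt : t ⟨0, by omega⟩ < t ⟨1, by omega⟩ := by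
        apply ht
        rw [Fin.lt_def]
        simp
      rcases mul_eq_zero.mp (by linarith : deriv h (t ⟨0, by omega⟩)
          * (t ⟨1, by omega⟩ - t ⟨0, by omega⟩) = 0) with hz | hz
      · exact hz
      · exfalso; linarith
    have hfin := hstep2 s hs
    rw [hA0, hd0] at hfin
    simp only [zero_mul, zero_add, add_zero] at hfin
    have : g s - splF t a b c s = 0 := hfin
    linarith
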